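/- Let f be a probability density on ℝ^d, let f*(x) := sup_{r>0} (∫_{B(x,r)} f(y) dy)/(V_d r^d) be its Hardy–Littlewood maximal function, and let H be a fixed finite connected graph on v ≥ 2 vertices labelled 1,...,v with edge set E_H. Let X_1,...,X_v be independent random vectors with density f, and let r > 0. Then E[∏_{(i,j)∈E_H} 1{‖X_i − X_j‖ ≤ r}] ≤ (V_d (v−1)^d r^d)^{v−1} · ∫ (f*)^v; in particular, if ∫ (f*)^v < ∞ this expectation is O(r^{d(v−1)}) as r ↓ 0. -/

import Mathlib

/-!
Since `H` is connected, every vertex lies within graph distance `v - 1` of vertex `0`, so on the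
event all of `X_1, …, X_{v-1}` lie in `B(X_0, (v - 1) r)`. Conditioning on `X_0 = x`, this has
probability `μ(B(x, (v - 1) r))^{v-1} ≤ (f*(x) V_d ((v - 1) r)^d)^{v-1}` by the definition of `f*`,
and integrating against `f(x) dx` with `f ≤ f*` a.e. (Lebesgue differentiation) gives the bound.
-/

open MeasureTheory Metric Filter

noncomputable section

abbrev Euc (d : ℕ) := EuclideanSpace ℝ (Fin d)

/-- `V_d`: the Lebesgue volume of the unit ball in ℝ^d. -/
def unitBallVol (d : ℕ) : ℝ := (volume (closedBall (0 : Euc d) 1)).toReal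

/-- The measure on ℝ^d with density `f` w.r.t. Lebesgue measure. -/
def densityMeasure {d : ℕ} (f : Euc d → ℝ) : Measure (Euc d) :=
  volume.withDensity fun x => ENNReal.ofReal (f x)

/-- The Hardy–Littlewood maximal function
`f*(x) = sup_{r > 0} (∫_{B(x,r)} f) / (V_d r^d)` (valued in `ℝ≥0∞`). -/
def maximalFn {d : ℕ} (f : Euc d → ℝ) (x : Euc d) : ENNReal :=
  ⨆ (r : ℝ) (_ : 0 < r),
    (∫⁻ y in closedBall x r, ENNReal.ofReal (f y)) / ENNReal.ofReal (unitBallVol d * r ^ d)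

lemma unitBallVol_pos (d : ℕ) : 0 < unitBallVol d :=
  ENNReal.toReal_pos (measure_closedBall_pos volume _ one_pos).ne' measure_closedBall_lt_top.ne

lemma volume_closedBall_eq_ofReal (d : ℕ) (x : Euc d) {s : ℝ} (hs : 0 ≤ s) :
    volume (closedBall x s) = ENNReal.ofReal (unitBallVol d * s ^ d) := by
  rw [ENNReal.ofReal_mul (unitBallVol_pos d).le, unitBallVol,
    ENNReal.ofReal_toReal measure_closedBall_lt_top.ne,
    Measure.addHaar_closedBall' volume x hs, finrank_euclideanSpace_fin, mul_comm]

lemma lintegral_closedBall_div_le_maximalFn {d : ℕ} (f : Euc d → ℝ) (x : Euc d) {s : ℝ}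
    (hs : 0 < s) :
    (∫⁻ y in closedBall x s, ENNReal.ofReal (f y)) / ENNReal.ofReal (unitBallVol d * s ^ d) ≤
      maximalFn f x :=
  le_iSup₂ (f := fun r (_ : 0 < r) => (∫⁻ y in closedBall x r, ENNReal.ofReal (f y)) /
    ENNReal.ofReal (unitBallVol d * r ^ d)) s hs

lemma densityMeasure_closedBall_le {d : ℕ} (f : Euc d → ℝ) (x : Euc d) {s : ℝ} (hs : 0 < s) :
    densityMeasure f (closedBall x s) ≤
      maximalFn f x * ENNReal.ofReal (unitBallVol d * s ^ d) := by
  have hvol : ENNReal.ofReal (unitBallVol d * s ^ d) ≠ 0 :=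
    ENNReal.ofReal_pos.mpr (mul_pos (unitBallVol_pos d) (pow_pos hs d)) |>.ne'
  rw [densityMeasure, withDensity_apply _ measurableSet_closedBall,
    ← ENNReal.div_le_iff hvol ENNReal.ofReal_ne_top]
  exact lintegral_closedBall_div_le_maximalFn f x hs

lemma ae_ofReal_le_maximalFn {d : ℕ} {f : Euc d → ℝ} (hmeas : Measurable f)
    (hfin : ∫⁻ x, ENNReal.ofReal (f x) ≠ ⊤) :
    ∀ᵐ x, ENNReal.ofReal (f x) ≤ maximalFn f x := by
  filter_upwards [(Besicovitch.vitaliFamily (volume : Measure (Euc d))).ae_tendsto_lintegral_div'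
      hmeas.ennreal_ofReal hfin] with x hx
  refine le_of_tendsto (hx.comp (Besicovitch.tendsto_filterAt volume x)) ?_
  filter_upwards [self_mem_nhdsWithin] with s (hs : 0 < s)
  simp only [Function.comp_apply, volume_closedBall_eq_ofReal d x hs.le]
  exact lintegral_closedBall_div_le_maximalFn f x hs

lemma dist_le_length_mul_of_walk {V α : Type*} [PseudoMetricSpace α]
    {G : SimpleGraph V} {x : V → α} {r : ℝ} (hx : ∀ i j, G.Adj i j → dist (x i) (x j) ≤ r)
    {i j : V} (w : G.Walk i j) :
    dist (x i) (x j) ≤ w.length * r := by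
  induction w with
  | nil => simp
  | @cons a b c hab _ ih =>
    rw [SimpleGraph.Walk.length_cons, Nat.cast_succ]
    linarith [hx a b hab, dist_triangle (x a) (x b) (x c)]

lemma dist_le_card_sub_one_mul_of_connected {V α : Type*} [Fintype V]
    [PseudoMetricSpace α] {G : SimpleGraph V} (hG : G.Connected) {x : V → α} {r : ℝ}
    (hr : 0 ≤ r) (hx : ∀ i j, G.Adj i j → dist (x i) (x j) ≤ r) (i j : V) :
    dist (x i) (x j) ≤ (Fintype.card V - 1 : ℕ) * r := by
  classical
  let w := (hG.preconnected i j).some.bypass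
  have hlen : w.length ≤ Fintype.card V - 1 :=
    Nat.le_sub_one_of_lt (SimpleGraph.Walk.bypass_isPath _).length_lt
  calc dist (x i) (x j) ≤ w.length * r := dist_le_length_mul_of_walk hx w
    _ ≤ (Fintype.card V - 1 : ℕ) * r := by gcongr

lemma pi_setOf_dist_le_eq_lintegral_measure_closedBall_pow {α : Type*} [PseudoMetricSpace α]
    [SecondCountableTopology α] [MeasurableSpace α] [BorelSpace α] (μ : Measure α)
    [SigmaFinite μ] (n : ℕ) (R : ℝ) :
    Measure.pi (fun _ : Fin (n + 1) => μ) {x | ∀ j : Fin n, dist (x j.succ) (x 0) ≤ R} =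
      ∫⁻ x, μ (closedBall x R) ^ n ∂μ := by
  let A : Set (α × (Fin n → α)) := {p | ∀ j, dist (p.2 j) p.1 ≤ R}
  have hA : MeasurableSet A := by
    simp only [A, Set.ofPred_forall]
    exact MeasurableSet.iInter fun j => measurableSet_le (by fun_prop) measurable_const
  have hpre : {x : Fin (n + 1) → α | ∀ j : Fin n, dist (x j.succ) (x 0) ≤ R} =
      MeasurableEquiv.piFinSuccAbove (fun _ => α) 0 ⁻¹' A := rfl
  rw [hpre, (measurePreserving_piFinSuccAbove (fun _ => μ) 0).measure_preimage
    hA.nullMeasurableSet, Measure.prod_apply hA]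
  refine lintegral_congr fun x => ?_
  have hslice : Prod.mk x ⁻¹' A = Set.univ.pi fun _ => closedBall x R := by
    ext y; simp [A, mem_closedBall]
  simp [hslice, Measure.pi_pi]

lemma lintegral_densityMeasure_closedBall_pow_le {d : ℕ} {f : Euc d → ℝ} (hmeas : Measurable f)
    (hfin : ∫⁻ x, ENNReal.ofReal (f x) ≠ ⊤) (n : ℕ) {R : ℝ} (hR : 0 < R) :
    ∫⁻ x, densityMeasure f (closedBall x R) ^ n ∂densityMeasure f ≤
      ENNReal.ofReal (unitBallVol d * R ^ d) ^ n * ∫⁻ x, maximalFn f x ^ (n + 1) := by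
  set C := ENNReal.ofReal (unitBallVol d * R ^ d)
  rw [← lintegral_const_mul' _ _ (ENNReal.pow_ne_top ENNReal.ofReal_ne_top), densityMeasure,
    lintegral_withDensity_eq_lintegral_mul_non_measurable _ hmeas.ennreal_ofReal
      (ae_of_all _ fun _ => ENNReal.ofReal_lt_top)]
  refine lintegral_mono_ae ?_
  filter_upwards [ae_ofReal_le_maximalFn hmeas hfin] with x hx
  calc ENNReal.ofReal (f x) * densityMeasure f (closedBall x R) ^ n
      ≤ maximalFn f x * (maximalFn f x * C) ^ n := by
        gcongr
        exact densityMeasure_closedBall_le f x hR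
    _ = C ^ n * maximalFn f x ^ (n + 1) := by ring

theorem connected_subgraph_prob_le_general (d : ℕ) (f : Euc d → ℝ)
    (hmeas : Measurable f)
    (hint : ∫⁻ x, ENNReal.ofReal (f x) = 1)
    (v : ℕ) (hv : 2 ≤ v) (H : SimpleGraph (Fin v)) (hH : H.Connected)
    (r : ℝ) (hr : 0 < r) :
    (Measure.pi fun _ : Fin v => densityMeasure f)
        {x | ∀ i j : Fin v, H.Adj i j → dist (x i) (x j) ≤ r} ≤
      ENNReal.ofReal (unitBallVol d * ((v : ℝ) - 1) ^ d * r ^ d) ^ (v - 1) *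
        ∫⁻ x, maximalFn f x ^ v := by
  obtain ⟨n, rfl⟩ : ∃ n, v = n + 1 := ⟨v - 1, by omega⟩
  have hfin : ∫⁻ x, ENNReal.ofReal (f x) ≠ ⊤ := by simp [hint]
  have : IsFiniteMeasure (densityMeasure f) := isFiniteMeasure_withDensity hfin
  have hR : 0 < (n : ℝ) * r := mul_pos (by exact_mod_cast (by omega : 0 < n)) hr
  have hsub : {x : Fin (n + 1) → Euc d | ∀ i j, H.Adj i j → dist (x i) (x j) ≤ r} ⊆
      {x | ∀ j : Fin n, dist (x j.succ) (x 0) ≤ n * r} := fun x hx j => by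
    simpa using dist_le_card_sub_one_mul_of_connected hH hr.le hx j.succ 0
  calc _ ≤ _ := measure_mono hsub
    _ = ∫⁻ x, densityMeasure f (closedBall x (n * r)) ^ n ∂densityMeasure f :=
        pi_setOf_dist_le_eq_lintegral_measure_closedBall_pow _ n _
    _ ≤ _ := lintegral_densityMeasure_closedBall_pow_le hmeas hfin n hR
    _ = _ := by push_cast; ring_nf

/-- Let `H` be a fixed finite connected graph on `v ≥ 2` vertices, let `X_1, …, X_v` be
independent with density `f`, and let `r > 0`. Then
`E[∏_{(i,j) ∈ E_H} 1{‖X_i − X_j‖ ≤ r}] ≤ (V_d (v−1)^d r^d)^{v−1} ∫ (f*)^v`. -/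
theorem connected_subgraph_prob_le (d : ℕ) (hd : 1 ≤ d) (f : Euc d → ℝ)
    (hmeas : Measurable f) (hpos : ∀ x, 0 ≤ f x)
    (hint : ∫⁻ x, ENNReal.ofReal (f x) = 1)
    (v : ℕ) (hv : 2 ≤ v) (H : SimpleGraph (Fin v)) (hH : H.Connected)
    (r : ℝ) (hr : 0 < r) :
    (Measure.pi fun _ : Fin v => densityMeasure f)
        {x | ∀ i j : Fin v, H.Adj i j → dist (x i) (x j) ≤ r} ≤
      ENNReal.ofReal (unitBallVol d * ((v : ℝ) - 1) ^ d * r ^ d) ^ (v - 1) *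
        ∫⁻ x, maximalFn f x ^ v :=
  connected_subgraph_prob_le_general d f hmeas hint v hv H hH r hr

end
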